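/- Let k ≥ 2 be an integer and let T be a balanced tree on 2k+1 vertices. Let G be a graph whose vertex set is partitioned into two nonempty sets A and B such that: every pair consisting of a vertex of A and a vertex of B is joined by an edge, B is an independent set in G, and the induced subgraph G[A] is a vertex-disjoint union covering all of A of copies of K_{k−1,k−1} and copies of K_{k,k} minus a perfect matching. Then G contains no subgraph isomorphic to the suspension T̂. -/

import Mathlib

/-!
Let `f` embed `T̂` in `G`, with apex `u`. If `u ∈ B`, all of `T` lands in `A` because `B` is
independent, and then, `T` being connected and `G[A]` having no edges between parts, inside a
single part; but a part has at most `2k < |T|` vertices. If `u` lies in a part `p`, every vertex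
of `T` lands in `p` or in `B`. Those landing in `p` are independent in `T` (parts are
triangle-free) and so are the others (`B` is independent), so they form a colour class of `T`,
of size `k` or `k + 1`. Yet they all land in the neighbourhood of `u` in `p`, of size `k - 1`.
-/

/-- The suspension `Ĥ` of a graph `H`: a new vertex (`none`) joined to all of `H`. -/
def suspension {V : Type*} (H : SimpleGraph V) : SimpleGraph (Option V) :=
  SimpleGraph.fromRel (fun x y => x = none ∨ ∃ a b, x = some a ∧ y = some b ∧ H.Adj a b)

/-- `K_{k,k}` minus a perfect matching: `Sum.inl i` is adjacent to `Sum.inr j` iff `i ≠ j`. -/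
def kkMinusPM (k : ℕ) : SimpleGraph (Fin k ⊕ Fin k) :=
  SimpleGraph.fromRel (fun x y =>
    match x, y with
    | Sum.inl i, Sum.inr j => i ≠ j
    | _, _ => False)

open Finset SimpleGraph

section Suspension

variable {V : Type*} (H : SimpleGraph V)

lemma suspension_adj_none_some (v : V) : (suspension H).Adj none (some v) := by
  simp [suspension]

lemma suspension_adj_some_some {a b : V} : (suspension H).Adj (some a) (some b) ↔ H.Adj a b := by
  simp only [suspension, fromRel_adj, ne_eq, Option.some.injEq, reduceCtorEq, false_or,
    exists_and_left, exists_eq_left']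
  exact ⟨fun h => h.2.elim id (·.symm), fun h => ⟨h.ne, .inl h⟩⟩

def suspension.incl : H →g suspension H where
  toFun := some
  map_rel' := (suspension_adj_some_some H).2

end Suspension

section Models

lemma completeBipartiteGraph_cliqueFree_three (α β : Type*) :
    (completeBipartiteGraph α β).CliqueFree 3 :=
  (CompleteBipartiteGraph.bicoloring α β).colorable.cliqueFree (by simp)

lemma kkMinusPM_le (k : ℕ) : kkMinusPM k ≤ completeBipartiteGraph (Fin k) (Fin k) := by
  intro x y h
  rw [kkMinusPM, fromRel_adj] at h
  rcases x with i | i <;> rcases y with j | j <;> simp_all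

lemma ncard_neighborSet_completeBipartiteGraph (m : ℕ) (v : Fin m ⊕ Fin m) :
    ((completeBipartiteGraph (Fin m) (Fin m)).neighborSet v).ncard = m := by
  set K := completeBipartiteGraph (Fin m) (Fin m)
  rcases v with i | i
  · have : K.neighborSet (.inl i) = Set.range Sum.inr := by ext (j | j) <;> simp [K]
    simp [this, Set.ncard_range_of_injective Sum.inr_injective]
  · have : K.neighborSet (.inr i) = Set.range Sum.inl := by ext (j | j) <;> simp [K]
    simp [this, Set.ncard_range_of_injective Sum.inl_injective]

lemma ncard_neighborSet_kkMinusPM (k : ℕ) (v : Fin k ⊕ Fin k) :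
    ((kkMinusPM k).neighborSet v).ncard = k - 1 := by
  rcases v with i | i
  · have : (kkMinusPM k).neighborSet (.inl i) = Sum.inr '' {i}ᶜ := by
      ext (j | j) <;> simp [kkMinusPM, eq_comm]
    rw [this, Set.ncard_image_of_injective _ Sum.inr_injective, Set.ncard_compl]
    simp
  · have : (kkMinusPM k).neighborSet (.inr i) = Sum.inl '' {i}ᶜ := by
      ext (j | j) <;> simp [kkMinusPM, eq_comm]
    rw [this, Set.ncard_image_of_injective _ Sum.inl_injective, Set.ncard_compl]
    simp

end Models

section Bipartition

variable {V : Type*} {T : SimpleGraph V}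

lemma SimpleGraph.Reachable.iff_of_forall_adj {P : V → Prop}
    (hP : ∀ ⦃a b⦄, T.Adj a b → (P a ↔ P b)) {x y : V} (h : T.Reachable x y) : P x ↔ P y := by
  obtain ⟨w⟩ := h
  induction w with
  | nil => rfl
  | cons hadj _ ih => exact (hP hadj).trans ih

lemma SimpleGraph.IsIndepSet.mem_iff_notMem_of_adj {S : Set V} (hS : T.IsIndepSet S)
    (hSc : T.IsIndepSet Sᶜ) {a b : V} (hab : T.Adj a b) : a ∈ S ↔ b ∉ S :=
  ⟨fun ha hb => hS ha hb hab.ne hab,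
    fun hb => by_contra fun ha => hSc ha hb hab.ne hab⟩

lemma SimpleGraph.Preconnected.eq_or_eq_compl_of_isIndepSet (hT : T.Preconnected)
    {S C : Set V} (hS : T.IsIndepSet S) (hSc : T.IsIndepSet Sᶜ)
    (hC : T.IsIndepSet C) (hCc : T.IsIndepSet Cᶜ) : S = C ∨ S = Cᶜ := by
  have hinv : ∀ ⦃a b⦄, T.Adj a b → ((a ∈ S ↔ a ∈ C) ↔ (b ∈ S ↔ b ∈ C)) := fun a b hab => by
    have := hS.mem_iff_notMem_of_adj hSc hab
    have := hC.mem_iff_notMem_of_adj hCc hab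
    tauto
  by_cases h : ∃ v, (v ∈ S ↔ v ∈ C)
  · obtain ⟨v, hv⟩ := h
    exact .inl (Set.ext fun w => ((hT v w).iff_of_forall_adj hinv).1 hv)
  · refine .inr (Set.ext fun w => ?_)
    have := not_exists.1 h w
    rw [Set.mem_compl_iff]
    tauto

end Bipartition

section Partition

variable {V W : Type*} [DecidableEq W] {T : SimpleGraph V} {G : SimpleGraph W}
  {A : Finset W} (P : Finpartition A)

lemma Finpartition.exists_forall_mem_of_preconnected [Nonempty V] (hT : T.Preconnected)
    (hcross : ∀ p ∈ P.parts, ∀ x ∈ p, ∀ y ∈ A, y ∉ p → ¬ G.Adj x y)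
    (φ : T →g G) (hφ : ∀ v, φ v ∈ A) : ∃ p ∈ P.parts, ∀ v, φ v ∈ p := by
  obtain ⟨v₀⟩ := ‹Nonempty V›
  obtain ⟨p, hp, hv₀⟩ := P.exists_mem (hφ v₀)
  have hinv : ∀ ⦃a b⦄, T.Adj a b → (φ a ∈ p ↔ φ b ∈ p) := fun a b hab =>
    ⟨fun ha => by_contra fun hb => hcross p hp _ ha _ (hφ b) hb (φ.map_adj hab),
      fun hb => by_contra fun ha => hcross p hp _ hb _ (hφ a) ha (φ.map_adj hab.symm)⟩
  exact ⟨p, hp, fun v => ((hT v₀ v).iff_of_forall_adj hinv).1 hv₀⟩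

lemma card_le_of_apex_notMem [Nonempty V] {m : ℕ} (hT : T.Preconnected)
    (hB : G.IsIndepSet (↑A : Set W)ᶜ)
    (hcross : ∀ p ∈ P.parts, ∀ x ∈ p, ∀ y ∈ A, y ∉ p → ¬ G.Adj x y)
    (hsize : ∀ p ∈ P.parts, #p ≤ m)
    (φ : T →g G) (hφ : Function.Injective φ) {u : W} (hu : u ∉ A)
    (hadj : ∀ v, G.Adj u (φ v)) : Nat.card V ≤ m := by
  have hφA : ∀ v, φ v ∈ A := fun v =>
    by_contra fun hv => hB (by simpa using hu) (by simpa using hv) (hadj v).ne (hadj v)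
  obtain ⟨p, hp, hφp⟩ := P.exists_forall_mem_of_preconnected hT hcross φ hφA
  calc Nat.card V ≤ Nat.card p :=
        Nat.card_le_card_of_injective (fun v => ⟨φ v, hφp v⟩) fun _ _ h => hφ congr($h.1)
    _ = #p := Nat.card_eq_finsetCard p
    _ ≤ m := hsize p hp

lemma exists_bipartition_ncard_le_of_apex_mem {d : ℕ}
    (hB : G.IsIndepSet (↑A : Set W)ᶜ)
    (hcross : ∀ p ∈ P.parts, ∀ x ∈ p, ∀ y ∈ A, y ∉ p → ¬ G.Adj x y)
    (htri : ∀ p ∈ P.parts, (G.induce (p : Set W)).CliqueFree 3)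
    (hdeg : ∀ p ∈ P.parts, ∀ x, ((G.induce (p : Set W)).neighborSet x).ncard ≤ d)
    (φ : T →g G) (hφ : Function.Injective φ) {u : W} (hu : u ∈ A)
    (hadj : ∀ v, G.Adj u (φ v)) :
    ∃ S : Set V, T.IsIndepSet S ∧ T.IsIndepSet Sᶜ ∧ S.ncard ≤ d := by
  obtain ⟨p, hp, hup⟩ := P.exists_mem hu
  have hout : ∀ v, φ v ∉ p → φ v ∉ A := fun v hv hvA => hcross p hp u hup _ hvA hv (hadj v)
  refine ⟨{v | φ v ∈ p}, ?_, ?_, ?_⟩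
  · intro a ha b hb _ hab
    have hab' : (G.induce (p : Set W)).Adj ⟨φ a, ha⟩ ⟨φ b, hb⟩ := φ.map_adj hab
    exact isIndepSet_neighborSet_of_triangleFree _ (htri p hp) ⟨u, hup⟩ (hadj a) (hadj b)
      hab'.ne hab'
  · intro a ha b hb _ hab
    exact hB (by simpa using hout a ha) (by simpa using hout b hb) (φ.map_adj hab).ne
      (φ.map_adj hab)
  · calc {v | φ v ∈ p}.ncard
        ≤ (Subtype.val '' (G.induce (p : Set W)).neighborSet ⟨u, hup⟩).ncard :=
          Set.ncard_le_ncard_of_injOn φ (fun v hv => ⟨⟨φ v, hv⟩, hadj v, rfl⟩) hφ.injOn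
            ((Set.toFinite _).image _)
      _ = ((G.induce (p : Set W)).neighborSet ⟨u, hup⟩).ncard :=
          Set.ncard_image_of_injective _ Subtype.val_injective
      _ ≤ d := hdeg p hp _

theorem not_exists_injective_hom_suspension {d m : ℕ} (hT : T.Preconnected) {C : Set V}
    (hC : T.IsIndepSet C) (hCc : T.IsIndepSet Cᶜ) (hdC : d < C.ncard) (hdCc : d < Cᶜ.ncard)
    (hV : m < Nat.card V) (hB : G.IsIndepSet (↑A : Set W)ᶜ)
    (hcross : ∀ p ∈ P.parts, ∀ x ∈ p, ∀ y ∈ A, y ∉ p → ¬ G.Adj x y)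
    (hsize : ∀ p ∈ P.parts, #p ≤ m)
    (htri : ∀ p ∈ P.parts, (G.induce (p : Set W)).CliqueFree 3)
    (hdeg : ∀ p ∈ P.parts, ∀ x, ((G.induce (p : Set W)).neighborSet x).ncard ≤ d) :
    ¬ ∃ f : suspension T →g G, Function.Injective f := by
  rintro ⟨f, hf⟩
  have hadj : ∀ v, G.Adj (f none) (f.comp (suspension.incl T) v) := fun v =>
    f.map_adj (suspension_adj_none_some T v)
  have hφ : Function.Injective (f.comp (suspension.incl T)) :=
    hf.comp (Option.some_injective V)
  by_cases hu : f none ∈ A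
  · obtain ⟨S, hS, hSc, hSd⟩ :=
      exists_bipartition_ncard_le_of_apex_mem P hB hcross htri hdeg _ hφ hu hadj
    rcases hT.eq_or_eq_compl_of_isIndepSet hS hSc hC hCc with rfl | rfl <;> omega
  · have : Nonempty V := Nat.card_pos_iff.1 (by omega) |>.1
    have := card_le_of_apex_notMem P hT hB hcross hsize _ hφ hu hadj
    omega

end Partition

lemma SimpleGraph.Iso.ncard_neighborSet_eq {V W : Type*} {G : SimpleGraph V}
    {H : SimpleGraph W} (e : G ≃g H) (v : V) :
    (H.neighborSet (e v)).ncard = (G.neighborSet v).ncard := by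
  rw [← e.image_neighborSet, Set.ncard_image_of_injective _ e.injective]

lemma card_le_and_cliqueFree_and_ncard_neighborSet_le_of_iso {W : Type*} {G : SimpleGraph W}
    {s : Finset W} (k : ℕ)
    (h : Nonempty (G.induce (s : Set W) ≃g completeBipartiteGraph (Fin (k - 1)) (Fin (k - 1))) ∨
      Nonempty (G.induce (s : Set W) ≃g kkMinusPM k)) :
    #s ≤ 2 * k ∧ (G.induce (s : Set W)).CliqueFree 3 ∧
      ∀ x, ((G.induce (s : Set W)).neighborSet x).ncard ≤ k - 1 := by
  rcases h with h | h <;> obtain ⟨e⟩ := h <;>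
    have hcard := Nat.card_congr e.toEquiv <;> simp at hcard
  · refine ⟨by omega, (completeBipartiteGraph_cliqueFree_three _ _).comap e.isContained,
      fun x => ?_⟩
    rw [← e.ncard_neighborSet_eq, ncard_neighborSet_completeBipartiteGraph]
  · refine ⟨by omega, ((completeBipartiteGraph_cliqueFree_three _ _).anti
      (kkMinusPM_le k)).comap e.isContained, fun x => ?_⟩
    rw [← e.ncard_neighborSet_eq, ncard_neighborSet_kkMinusPM]

theorem stmt18_general (k : ℕ) (hk : 2 ≤ k)
    {V : Type} [Fintype V] [DecidableEq V] (T : SimpleGraph V)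
    (htree : T.IsTree)
    (hcard : Fintype.card V = 2 * k + 1)
    (C : Finset V) (hC : C.card = k)
    (hCind : ∀ x ∈ C, ∀ y ∈ C, ¬ T.Adj x y)
    (hCcind : ∀ x ∈ Cᶜ, ∀ y ∈ Cᶜ, ¬ T.Adj x y)
    {W : Type} [Fintype W] [DecidableEq W]
    (G : SimpleGraph W) (A : Finset W)
    -- `B = Aᶜ` is an independent set
    (hBind : ∀ x ∈ Aᶜ, ∀ y ∈ Aᶜ, ¬ G.Adj x y)
    -- `G[A]` is a vertex-disjoint union, covering `A`, of copies of `K_{k-1,k-1}`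
    -- and copies of `K_{k,k}` minus a perfect matching
    (P : Finpartition A)
    (hparts : ∀ p ∈ P.parts,
      Nonempty ((G.induce (↑p : Set W)) ≃g
        completeBipartiteGraph (Fin (k - 1)) (Fin (k - 1))) ∨
      Nonempty ((G.induce (↑p : Set W)) ≃g kkMinusPM k))
    (hcross : ∀ p ∈ P.parts, ∀ x ∈ p, ∀ y ∈ A, y ∉ p → ¬ G.Adj x y) :
    ¬ ∃ f : suspension T →g G, Function.Injective f := by
  have hbounds p hp := card_le_and_cliqueFree_and_ncard_neighborSet_le_of_iso k (hparts p hp)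
  refine not_exists_injective_hom_suspension P (d := k - 1) (m := 2 * k)
    htree.connected.preconnected (C := C) (fun x hx y hy _ => hCind x hx y hy)
    (fun x hx y hy _ => hCcind x (by simpa using hx) y (by simpa using hy)) ?_ ?_ ?_
    (fun x hx y hy _ => hBind x (by simpa using hx) y (by simpa using hy)) hcross
    (fun p hp => (hbounds p hp).1) (fun p hp => (hbounds p hp).2.1)
    (fun p hp => (hbounds p hp).2.2)
  · rw [Set.ncard_coe_finset]; omega
  · rw [← Finset.coe_compl, Set.ncard_coe_finset, card_compl]; omega
  · rw [Nat.card_eq_fintype_card]; omega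

theorem stmt18 (k : ℕ) (hk : 2 ≤ k)
    {V : Type} [Fintype V] [DecidableEq V] (T : SimpleGraph V)
    (htree : T.IsTree)
    (hcard : Fintype.card V = 2 * k + 1)
    (C : Finset V) (hC : C.card = k)
    (hCind : ∀ x ∈ C, ∀ y ∈ C, ¬ T.Adj x y)
    (hCcind : ∀ x ∈ Cᶜ, ∀ y ∈ Cᶜ, ¬ T.Adj x y)
    {W : Type} [Fintype W] [DecidableEq W]
    (G : SimpleGraph W) (A : Finset W)
    (hAne : A.Nonempty) (hBne : Aᶜ.Nonempty)
    -- every vertex of `A` is joined to every vertex of `B = Aᶜ`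
    (hcomplete : ∀ x ∈ A, ∀ y ∈ Aᶜ, G.Adj x y)
    -- `B = Aᶜ` is an independent set
    (hBind : ∀ x ∈ Aᶜ, ∀ y ∈ Aᶜ, ¬ G.Adj x y)
    -- `G[A]` is a vertex-disjoint union, covering `A`, of copies of `K_{k-1,k-1}`
    -- and copies of `K_{k,k}` minus a perfect matching
    (P : Finpartition A)
    (hparts : ∀ p ∈ P.parts,
      Nonempty ((G.induce (↑p : Set W)) ≃g
        completeBipartiteGraph (Fin (k - 1)) (Fin (k - 1))) ∨
      Nonempty ((G.induce (↑p : Set W)) ≃g kkMinusPM k))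
    (hcross : ∀ p ∈ P.parts, ∀ x ∈ p, ∀ y ∈ A, y ∉ p → ¬ G.Adj x y) :
    ¬ ∃ f : suspension T →g G, Function.Injective f :=
  stmt18_general k hk T htree hcard C hC hCind hCcind G A hBind P hparts hcross
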